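/- On ℝ⁸ with standard coframe ξ⁰,...,ξ³,η⁰,...,η³, the 4-form −Ω₁+Ω₂−Ω₃ equals ξ⁰∧ζ + *_ζ ζ where ζ := ξ¹∧(ξ³∧ξ² + η⁰∧η¹ − η³∧η²) + Re((ξ³+ξ²i)∧(η⁰+η¹i)∧(η³−η²i)) is a 3-form on the 7-dimensional subspace spanned by ξ¹,ξ²,ξ³,η⁰,η¹,η²,η³, and *_ζ denotes the Hodge star on that 7-dimensional subspace. -/

import Mathlib

/-!
Statement 11: on ℝ⁸ with standard coframe ξ⁰,…,ξ³,η⁰,…,η⁴ (modelled by e 0,…,e 7,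
with ηⁱ = e (4+i)), the 4-form −Ω₁+Ω₂−Ω₃ equals ξ⁰∧ζ + *ζ, where ζ is the G₂
3-form on the 7-dimensional subspace spanned by ξ¹,ξ²,ξ³,η⁰,…,η³ (i.e. e 1,…,e 7)
and * is the Hodge star of that subspace, characterized on basis 3-forms by:
for every permutation σ of the seven indices,
*(E σ(0) ∧ E σ(1) ∧ E σ(2)) = sign σ • (E σ(3) ∧ E σ(4) ∧ E σ(5) ∧ E σ(6)).
-/

open ExteriorAlgebra
open scoped TensorProduct

set_option synthInstance.maxHeartbeats 1000000
set_option maxHeartbeats 1000000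

noncomputable section

/-- The standard coframe of ℝ⁸ inside its exterior algebra. -/
def e (i : Fin 8) : ExteriorAlgebra ℝ (Fin 8 → ℝ) := ι ℝ (Pi.single i 1)

/-- The coframe of the 7-dimensional subspace: ξ¹,ξ²,ξ³,η⁰,η¹,η²,η³. -/
def E (i : Fin 7) : ExteriorAlgebra ℝ (Fin 8 → ℝ) := e i.succ

/-- The real part of a complex-valued form. -/
def reC : ℂ ⊗[ℝ] ExteriorAlgebra ℝ (Fin 8 → ℝ) →ₗ[ℝ] ExteriorAlgebra ℝ (Fin 8 → ℝ) :=
  (TensorProduct.lid ℝ (ExteriorAlgebra ℝ (Fin 8 → ℝ))).toLinearMap ∘ₗ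
    TensorProduct.map Complex.reLm LinearMap.id

/-- Ω₁ = ξ⁰∧ξ¹∧ξ²∧ξ³. -/
def Ω₁ : ExteriorAlgebra ℝ (Fin 8 → ℝ) := e 0 * e 1 * e 2 * e 3

/-- Ω₃ = η⁰∧η¹∧η²∧η³. -/
def Ω₃ : ExteriorAlgebra ℝ (Fin 8 → ℝ) := e 4 * e 5 * e 6 * e 7

/-- Ω₂, the twelve-term mixed 4-form. -/
def Ω₂ : ExteriorAlgebra ℝ (Fin 8 → ℝ) :=
    e 0 * e 1 * e 4 * e 5 + e 0 * e 1 * e 6 * e 7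
  + e 2 * e 3 * e 4 * e 5 + e 2 * e 3 * e 6 * e 7
  + e 0 * e 2 * e 4 * e 6 - e 0 * e 2 * e 5 * e 7
  - e 1 * e 3 * e 4 * e 6 + e 1 * e 3 * e 5 * e 7
  + e 0 * e 3 * e 4 * e 7 + e 0 * e 3 * e 5 * e 6
  + e 1 * e 2 * e 4 * e 7 + e 1 * e 2 * e 5 * e 6

/-- ζ = ξ¹∧(ξ³∧ξ² + η⁰∧η¹ − η³∧η²) + Re((ξ³+ξ²i)∧(η⁰+η¹i)∧(η³−η²i)). -/
def ζ : ExteriorAlgebra ℝ (Fin 8 → ℝ) :=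
  e 1 * (e 3 * e 2 + e 4 * e 5 - e 7 * e 6) +
    reC (((1 : ℂ) ⊗ₜ e 3 + Complex.I ⊗ₜ e 2) * ((1 : ℂ) ⊗ₜ e 4 + Complex.I ⊗ₜ e 5) *
      ((1 : ℂ) ⊗ₜ e 7 - Complex.I ⊗ₜ e 6))

/-! On the 7-dimensional subspace the Hodge star sends a basis 3-form `E i * E j * E k` to the
complementary basis 4-form, up to the sign of the permutation listing `i, j, k` first. Written in
increasing index order, ζ is a signed sum of seven basis 3-forms whose completing index
permutations are all even, so `*ζ` is the sum of the seven complementary 4-forms with the same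
signs. Those are exactly the terms of `-Ω₁ + Ω₂ - Ω₃` not containing `ξ⁰`, and `ξ⁰ ∧ ζ` supplies
the remaining ones. -/

theorem e_mul_e_anticomm (i j : Fin 8) : e i * e j = -(e j * e i) :=
  eq_neg_of_add_eq_zero_left (ι_add_mul_swap _ _)

theorem ζ_eq : ζ = -(e 1 * e 2 * e 3) + e 1 * e 4 * e 5 + e 1 * e 6 * e 7
    + e 3 * e 4 * e 7 + e 3 * e 5 * e 6 + e 2 * e 4 * e 6 - e 2 * e 5 * e 7 := by
  simp only [ζ, reC, e_mul_e_anticomm 3 2, e_mul_e_anticomm 7 6, LinearMap.comp_apply,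
    Algebra.TensorProduct.tmul_mul_tmul, mul_add, add_mul, mul_sub, map_add, map_sub,
    TensorProduct.map_tmul, Complex.reLm_coe, LinearMap.id_apply, LinearEquiv.coe_coe,
    TensorProduct.lid_tmul, Complex.mul_re, Complex.mul_im, Complex.one_re,
    Complex.I_re, Complex.I_im, one_mul, mul_one, mul_zero, add_zero, sub_zero, zero_sub, one_smul,
    zero_smul, neg_smul, mul_neg, ← mul_assoc]
  abel

def IsHodgeStar (hodge : ExteriorAlgebra ℝ (Fin 8 → ℝ) →ₗ[ℝ] ExteriorAlgebra ℝ (Fin 8 → ℝ)) :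
    Prop :=
  ∀ σ : Equiv.Perm (Fin 7), hodge (E (σ 0) * E (σ 1) * E (σ 2)) =
    (Equiv.Perm.sign σ : ℤ) • (E (σ 3) * E (σ 4) * E (σ 5) * E (σ 6))

section

variable {hodge : ExteriorAlgebra ℝ (Fin 8 → ℝ) →ₗ[ℝ] ExteriorAlgebra ℝ (Fin 8 → ℝ)}

theorem IsHodgeStar.apply_of_sign_eq_one (h : IsHodgeStar hodge) (f : Fin 7 → Fin 7)
    (hf : f.Injective) (hsign : Equiv.Perm.sign (Equiv.ofBijective f hf.bijective_of_finite) = 1) :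
    hodge (E (f 0) * E (f 1) * E (f 2)) = E (f 3) * E (f 4) * E (f 5) * E (f 6) := by
  simpa [hsign] using h (Equiv.ofBijective f hf.bijective_of_finite)

theorem hodge_ζ (h : IsHodgeStar hodge) :
    hodge ζ = -(e 4 * e 5 * e 6 * e 7) + e 2 * e 3 * e 6 * e 7 + e 2 * e 3 * e 4 * e 5
      + e 1 * e 2 * e 5 * e 6 + e 1 * e 2 * e 4 * e 7 + e 1 * e 3 * e 5 * e 7
      - e 1 * e 3 * e 4 * e 6 := by
  have h₁ : hodge (e 1 * e 2 * e 3) = e 4 * e 5 * e 6 * e 7 :=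
    h.apply_of_sign_eq_one ![0, 1, 2, 3, 4, 5, 6] (by decide) (by decide)
  have h₂ : hodge (e 1 * e 4 * e 5) = e 2 * e 3 * e 6 * e 7 :=
    h.apply_of_sign_eq_one ![0, 3, 4, 1, 2, 5, 6] (by decide) (by decide)
  have h₃ : hodge (e 1 * e 6 * e 7) = e 2 * e 3 * e 4 * e 5 :=
    h.apply_of_sign_eq_one ![0, 5, 6, 1, 2, 3, 4] (by decide) (by decide)
  have h₄ : hodge (e 3 * e 4 * e 7) = e 1 * e 2 * e 5 * e 6 :=
    h.apply_of_sign_eq_one ![2, 3, 6, 0, 1, 4, 5] (by decide) (by decide)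
  have h₅ : hodge (e 3 * e 5 * e 6) = e 1 * e 2 * e 4 * e 7 :=
    h.apply_of_sign_eq_one ![2, 4, 5, 0, 1, 3, 6] (by decide) (by decide)
  have h₆ : hodge (e 2 * e 4 * e 6) = e 1 * e 3 * e 5 * e 7 :=
    h.apply_of_sign_eq_one ![1, 3, 5, 0, 2, 4, 6] (by decide) (by decide)
  have h₇ : hodge (e 2 * e 5 * e 7) = e 1 * e 3 * e 4 * e 6 :=
    h.apply_of_sign_eq_one ![1, 4, 6, 0, 2, 3, 5] (by decide) (by decide)
  rw [ζ_eq]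
  simp only [map_add, map_sub, map_neg, h₁, h₂, h₃, h₄, h₅, h₆, h₇]

end

theorem cayley_form_g2_decomposition
    (hodge : ExteriorAlgebra ℝ (Fin 8 → ℝ) →ₗ[ℝ] ExteriorAlgebra ℝ (Fin 8 → ℝ))
    -- `hodge` is the Hodge star on 3-forms of the oriented Euclidean 7-space
    -- spanned by ξ¹,ξ²,ξ³,η⁰,η¹,η²,η³ :
    (hhodge : ∀ σ : Equiv.Perm (Fin 7),
      hodge (E (σ 0) * E (σ 1) * E (σ 2)) =
        (Equiv.Perm.sign σ : ℤ) • (E (σ 3) * E (σ 4) * E (σ 5) * E (σ 6))) :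
    -Ω₁ + Ω₂ - Ω₃ = e 0 * ζ + hodge ζ := by
  rw [hodge_ζ hhodge, ζ_eq, Ω₁, Ω₂, Ω₃]
  simp only [mul_add, mul_sub, mul_neg, ← mul_assoc]
  abel
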